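/- Suppose there exist a real normed space Y whose norm satisfies the δ-parallelogram law for some δ ∈ [0,1) and a nonzero linear mapping T : X → Y such that for all x,y ∈ X, x ⊥_{ρ*} y implies Tx ⊥_{ρ*} Ty. Then X is equivalent to an inner product space: there exist an inner product on X with generated norm |||·||| and a constant k ≥ 1 such that (1/k)‖x‖ ≤ |||x||| ≤ k‖x‖ for all x ∈ X. -/

import Mathlib

open Filter Topology

/-- The norm derivative `ρ₊(x,y) = lim_{t→0⁺} (‖x+ty‖² − ‖x‖²)/(2t)`. -/
noncomputable def rhoPlus {X : Type*} [NormedAddCommGroup X] [NormedSpace ℝ X] (x y : X) : ℝ :=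
  limUnder (𝓝[>] (0 : ℝ)) (fun t : ℝ => (‖x + t • y‖ ^ 2 - ‖x‖ ^ 2) / (2 * t))

/-- The norm derivative `ρ₋(x,y) = lim_{t→0⁻} (‖x+ty‖² − ‖x‖²)/(2t)`. -/
noncomputable def rhoMinus {X : Type*} [NormedAddCommGroup X] [NormedSpace ℝ X] (x y : X) : ℝ :=
  limUnder (𝓝[<] (0 : ℝ)) (fun t : ℝ => (‖x + t • y‖ ^ 2 - ‖x‖ ^ 2) / (2 * t))

/-- `ρ*(x,y) := ρ₋(x,y)·ρ₊(x,y)`. -/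
noncomputable def rhoStar {X : Type*} [NormedAddCommGroup X] [NormedSpace ℝ X] (x y : X) : ℝ :=
  rhoMinus x y * rhoPlus x y

/-!
Testing the hypothesis on `y - (ρ₊(u,y)/‖u‖²) • u`, which is `ρ₊`-orthogonal to `u`, gives
`|ρ₊(u,y)| ‖T u‖ ≤ ‖u‖² ‖T y‖`. A case analysis on the signs of `ρ₊(u,v)` and `ρ₊(v,u)`, passing
through `m = u + 2v` when both are small, upgrades this to `‖T u‖ ≤ 12 ‖T v‖` for unit vectors, so
`T` is an isomorphic embedding.

On `Y`, apply a translation-invariant mean on the abelian group `(Y, +)` (obtained from Day's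
sublinear functional by Hahn–Banach) to `w ↦ ‖w + y‖² + ‖w - y‖² - 2‖w‖²`. The result `Q y`
satisfies the parallelogram identity exactly, and the δ-parallelogram law pins it between
`2(1 - δ)‖y‖²` and `2(1 + δ)‖y‖²`. Then `Q ∘ T` is a quadratic functional on `X` comparable to
`‖·‖²`, and, as in the Jordan–von Neumann theorem, its polarization is the required inner product.
-/

open Set

section NormDerivative

variable {E : Type*} [NormedAddCommGroup E] [NormedSpace ℝ E]

lemma convexOn_norm_add_smul_sq_div_two (x y : E) :
    ConvexOn ℝ univ (fun t : ℝ => ‖x + t • y‖ ^ 2 / 2) := by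
  have hnorm : ConvexOn ℝ univ (fun t : ℝ => ‖x + t • y‖) :=
    (convexOn_univ_norm.translate_right x).comp_linearMap (LinearMap.toSpanSingleton ℝ E y)
  refine ((hnorm.pow (fun t _ => norm_nonneg _) 2).smul (by norm_num : (0 : ℝ) ≤ 1 / 2)).congr
    fun t _ => ?_
  simp only [Pi.pow_apply, smul_eq_mul]
  ring

lemma slope_norm_add_smul_sq_div_two (x y : E) :
    slope (fun t : ℝ => ‖x + t • y‖ ^ 2 / 2) 0 =
      fun t => (‖x + t • y‖ ^ 2 - ‖x‖ ^ 2) / (2 * t) := by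
  ext t
  rw [slope_def_field, zero_smul, add_zero, sub_zero]
  ring

lemma rhoPlus_eq_of_hasDerivWithinAt {x y : E} {r : ℝ}
    (h : HasDerivWithinAt (fun t : ℝ => ‖x + t • y‖ ^ 2 / 2) r (Ioi 0) 0) :
    rhoPlus x y = r := by
  have h' := (hasDerivWithinAt_iff_tendsto_slope' (by simp)).1 h
  rw [slope_norm_add_smul_sq_div_two] at h'
  exact h'.limUnder_eq

lemma rhoMinus_eq_of_hasDerivWithinAt {x y : E} {r : ℝ}
    (h : HasDerivWithinAt (fun t : ℝ => ‖x + t • y‖ ^ 2 / 2) r (Iio 0) 0) :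
    rhoMinus x y = r := by
  have h' := (hasDerivWithinAt_iff_tendsto_slope' (by simp)).1 h
  rw [slope_norm_add_smul_sq_div_two] at h'
  exact h'.limUnder_eq

lemma hasDerivWithinAt_rhoPlus (x y : E) :
    HasDerivWithinAt (fun t : ℝ => ‖x + t • y‖ ^ 2 / 2) (rhoPlus x y) (Ioi 0) 0 := by
  have h := (convexOn_norm_add_smul_sq_div_two x y).hasDerivWithinAt_rightDeriv_of_mem_interior
    (by simp : (0 : ℝ) ∈ interior univ)
  rwa [rhoPlus_eq_of_hasDerivWithinAt h]

lemma hasDerivWithinAt_rhoMinus (x y : E) :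
    HasDerivWithinAt (fun t : ℝ => ‖x + t • y‖ ^ 2 / 2) (rhoMinus x y) (Iio 0) 0 := by
  have h := (convexOn_norm_add_smul_sq_div_two x y).hasDerivWithinAt_leftDeriv_of_mem_interior
    (by simp : (0 : ℝ) ∈ interior univ)
  rwa [rhoMinus_eq_of_hasDerivWithinAt h]

lemma rhoMinus_le_rhoPlus (x y : E) : rhoMinus x y ≤ rhoPlus x y := by
  have h0 : (0 : ℝ) ∈ interior univ := by simp
  have hconv := convexOn_norm_add_smul_sq_div_two x y
  rw [rhoMinus_eq_of_hasDerivWithinAt (hconv.hasDerivWithinAt_leftDeriv_of_mem_interior h0),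
    rhoPlus_eq_of_hasDerivWithinAt (hconv.hasDerivWithinAt_rightDeriv_of_mem_interior h0)]
  exact hconv.leftDeriv_le_rightDeriv_of_mem_interior h0

lemma rhoPlus_neg_right (x y : E) : rhoPlus x (-y) = -rhoMinus x y := by
  apply rhoPlus_eq_of_hasDerivWithinAt
  have h := (hasDerivWithinAt_rhoMinus x y).comp_of_eq 0 (hasDerivAt_neg (0 : ℝ)).hasDerivWithinAt
    (fun t (ht : t ∈ Ioi 0) => neg_lt_zero.2 ht) neg_zero.symm
  have e : (fun t : ℝ => ‖x + t • -y‖ ^ 2 / 2) = (fun t => ‖x + t • y‖ ^ 2 / 2) ∘ Neg.neg := by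
    ext t
    simp [smul_neg, neg_smul]
  rw [e, ← mul_neg_one]
  exact h

lemma rhoMinus_eq_neg_rhoPlus_neg (x y : E) : rhoMinus x y = -rhoPlus x (-y) := by
  rw [rhoPlus_neg_right, neg_neg]

lemma rhoPlus_neg_left (x y : E) : rhoPlus (-x) y = rhoPlus x (-y) := by
  unfold rhoPlus
  congr 1
  ext t
  rw [norm_neg, ← norm_neg (-x + t • y), neg_add', neg_neg, smul_neg, ← sub_eq_add_neg]

lemma rhoPlus_le (x y : E) : rhoPlus x y ≤ ‖x‖ * ‖y‖ := by
  have h := hasDerivWithinAt_rhoPlus x y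
  rw [hasDerivWithinAt_iff_tendsto_slope' (by simp), slope_norm_add_smul_sq_div_two] at h
  have hbound : Tendsto (fun t : ℝ => ‖x‖ * ‖y‖ + t * ‖y‖ ^ 2 / 2) (𝓝[>] 0)
      (𝓝 (‖x‖ * ‖y‖)) := by
    have : Continuous fun t : ℝ => ‖x‖ * ‖y‖ + t * ‖y‖ ^ 2 / 2 := by fun_prop
    simpa using (this.tendsto 0).mono_left nhdsWithin_le_nhds
  refine le_of_tendsto_of_tendsto h hbound
    (eventually_nhdsWithin_of_forall fun t (ht : 0 < t) => ?_)
  have htri : ‖x + t • y‖ ≤ ‖x‖ + t * ‖y‖ := by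
    simpa [norm_smul, abs_of_pos ht] using norm_add_le x (t • y)
  rw [div_le_iff₀ (by positivity)]
  nlinarith [norm_nonneg (x + t • y)]

lemma abs_rhoPlus_le (x y : E) : |rhoPlus x y| ≤ ‖x‖ * ‖y‖ := by
  have hneg := rhoPlus_le x (-y)
  rw [rhoPlus_neg_right, norm_neg] at hneg
  exact abs_le.2 ⟨by linarith [rhoMinus_le_rhoPlus x y], rhoPlus_le x y⟩

lemma abs_rhoMinus_le (x y : E) : |rhoMinus x y| ≤ ‖x‖ * ‖y‖ := by
  rw [rhoMinus_eq_neg_rhoPlus_neg, abs_neg, ← norm_neg y]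
  exact abs_rhoPlus_le x (-y)

lemma rhoPlus_smul_add_smul (x y : E) {a : ℝ} (ha : 0 < a) (b : ℝ) :
    rhoPlus x (a • y + b • x) = a * rhoPlus x y + b * ‖x‖ ^ 2 := by
  apply rhoPlus_eq_of_hasDerivWithinAt
  set U : Set ℝ := {t | 0 < 1 + t * b}
  have hU : U ∈ 𝓝 0 := (isOpen_lt continuous_const (by fun_prop)).mem_nhds (by simp)
  have hden : HasDerivAt (fun t : ℝ => 1 + t * b) b 0 := by
    simpa using ((hasDerivAt_id (0 : ℝ)).mul_const b).const_add 1
  set φ : ℝ → ℝ := fun t => t * a / (1 + t * b)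
  have hφ : HasDerivAt φ a 0 := by
    have hnum : HasDerivAt (fun t : ℝ => t * a) a 0 := by
      simpa using (hasDerivAt_id (0 : ℝ)).mul_const a
    exact (hnum.fun_div hden (by simp)).congr_deriv (by simp)
  have hmaps : MapsTo φ (Ioi 0 ∩ U) (Ioi 0) := fun t ht => div_pos (mul_pos ht.1 ha) ht.2
  have hcomp := (hasDerivWithinAt_rhoPlus x y).comp_of_eq 0 hφ.hasDerivWithinAt hmaps (by simp [φ])
  have hprod := (hden.pow 2).hasDerivWithinAt.mul hcomp
  rw [← hasDerivWithinAt_inter hU]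
  refine (hprod.congr (fun t ht => ?_) (by simp [φ])).congr_deriv (by simp [φ]; ring)
  have hvec : x + t • (a • y + b • x) = (1 + t * b) • (x + φ t • y) := by
    rw [smul_add (1 + t * b), smul_smul, mul_div_cancel₀ _ ht.2.ne']
    module
  simp only [Pi.mul_apply, Pi.pow_apply, Function.comp_apply]
  rw [hvec, norm_smul, mul_pow, Real.norm_eq_abs, sq_abs]
  ring

end NormDerivative

section RhoStar

variable {E : Type*} [NormedAddCommGroup E] [NormedSpace ℝ E]

lemma rhoMinus_smul_add_smul (x y : E) {a : ℝ} (ha : 0 < a) (b : ℝ) :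
    rhoMinus x (a • y + b • x) = a * rhoMinus x y + b * ‖x‖ ^ 2 := by
  rw [rhoMinus_eq_neg_rhoPlus_neg, rhoMinus_eq_neg_rhoPlus_neg,
    show -(a • y + b • x) = a • -y + (-b) • x by module, rhoPlus_smul_add_smul x (-y) ha]
  ring

lemma rhoStar_add_smul (x y : E) (b : ℝ) :
    rhoStar x (y + b • x) = (rhoMinus x y + b * ‖x‖ ^ 2) * (rhoPlus x y + b * ‖x‖ ^ 2) := by
  have hplus := rhoPlus_smul_add_smul x y one_pos b
  have hminus := rhoMinus_smul_add_smul x y one_pos b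
  rw [one_smul, one_mul] at hplus hminus
  rw [rhoStar, hplus, hminus]

lemma abs_mul_norm_le_of_rhoStar_add_smul_eq_zero {x y : E} {b : ℝ}
    (h : rhoStar x (y + b • x) = 0) : |b| * ‖x‖ ≤ ‖y‖ := by
  rcases (norm_nonneg x).eq_or_lt with hx | hx
  · rw [← hx, mul_zero]
    exact norm_nonneg y
  have hsq : |b * ‖x‖ ^ 2| ≤ ‖x‖ * ‖y‖ := by
    rw [rhoStar_add_smul] at h
    rcases mul_eq_zero.1 h with h | h
    · rw [show b * ‖x‖ ^ 2 = -rhoMinus x y by linarith, abs_neg]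
      exact abs_rhoMinus_le x y
    · rw [show b * ‖x‖ ^ 2 = -rhoPlus x y by linarith, abs_neg]
      exact abs_rhoPlus_le x y
  rw [abs_mul, abs_sq] at hsq
  nlinarith

end RhoStar

section OrthogonalityPreserving

variable {X Y : Type*} [NormedAddCommGroup X] [NormedSpace ℝ X]
  [NormedAddCommGroup Y] [NormedSpace ℝ Y]

def PreservesRhoStarOrthogonality (T : X →ₗ[ℝ] Y) : Prop :=
  ∀ x y : X, rhoStar x y = 0 → rhoStar (T x) (T y) = 0

variable {T : X →ₗ[ℝ] Y}

lemma abs_rhoPlus_mul_norm_map_le (hT : PreservesRhoStarOrthogonality T) (u y : X) :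
    |rhoPlus u y| * ‖T u‖ ≤ ‖u‖ ^ 2 * ‖T y‖ := by
  rcases eq_or_ne u 0 with rfl | hu
  · simp
  set b := rhoPlus u y / ‖u‖ ^ 2
  have hnorm : ‖u‖ ^ 2 ≠ 0 := by positivity
  have horth : rhoStar u (y + (-b) • u) = 0 := by
    rw [rhoStar_add_smul]
    refine mul_eq_zero_of_right _ ?_
    simp only [b]
    field_simp
    ring
  have hbound : |-b| * ‖T u‖ ≤ ‖T y‖ := by
    apply abs_mul_norm_le_of_rhoStar_add_smul_eq_zero
    simpa using hT _ _ horth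
  calc |rhoPlus u y| * ‖T u‖ = ‖u‖ ^ 2 * (|-b| * ‖T u‖) := by
        rw [abs_neg, abs_div, abs_sq]
        field_simp
    _ ≤ ‖u‖ ^ 2 * ‖T y‖ := by gcongr

lemma norm_map_le_of_neg_le_rhoPlus (hT : PreservesRhoStarOrthogonality T) {u v : X}
    (hu : ‖u‖ = 1) (hv : ‖v‖ = 1) (huv : -(1 / 4) ≤ rhoPlus u v) (hvu : -(1 / 2) ≤ rhoPlus v u) :
    ‖T u‖ ≤ 12 * ‖T v‖ := by
  set m := u + (2 : ℝ) • v
  have hum : rhoPlus u m = 2 * rhoPlus u v + 1 := by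
    rw [show m = (2 : ℝ) • v + (1 : ℝ) • u by module, rhoPlus_smul_add_smul u v two_pos, hu]
    ring
  have hvm : rhoPlus v m = rhoPlus v u + 2 := by
    rw [show m = (1 : ℝ) • u + (2 : ℝ) • v by module, rhoPlus_smul_add_smul v u one_pos, hv]
    ring
  have hmv : rhoPlus m v = rhoPlus m (-u) / 2 + ‖m‖ ^ 2 / 2 := by
    rw [show v = (1 / 2 : ℝ) • -u + (1 / 2 : ℝ) • m by module,
      rhoPlus_smul_add_smul m (-u) (by norm_num)]
    ring
  have hm : 3 / 2 ≤ ‖m‖ := by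
    have := rhoPlus_le v m
    rw [hv] at this
    linarith
  have hmu : -‖m‖ ≤ rhoPlus m (-u) := by
    have := abs_rhoPlus_le m (-u)
    rw [norm_neg, hu, mul_one] at this
    exact (abs_le.1 this).1
  have hTu : ‖T u‖ ≤ 2 * ‖T m‖ := by
    have := abs_rhoPlus_mul_norm_map_le hT u m
    rw [hu, abs_of_pos (by linarith)] at this
    nlinarith [norm_nonneg (T u)]
  have hTm : ‖T m‖ ≤ 6 * ‖T v‖ := by
    have := abs_rhoPlus_mul_norm_map_le hT m v
    rw [abs_of_pos (by nlinarith)] at this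
    have hmv' : ‖m‖ ^ 2 / 6 ≤ rhoPlus m v := by nlinarith
    have : ‖m‖ ^ 2 * ‖T m‖ ≤ ‖m‖ ^ 2 * (6 * ‖T v‖) := by nlinarith [norm_nonneg (T m)]
    exact le_of_mul_le_mul_left this (by positivity)
  linarith

lemma norm_map_le_of_norm_eq_one (hT : PreservesRhoStarOrthogonality T) {u v : X}
    (hu : ‖u‖ = 1) (hv : ‖v‖ = 1) : ‖T u‖ ≤ 12 * ‖T v‖ := by
  by_cases hbig : 1 / 4 ≤ |rhoPlus u v|
  · have := abs_rhoPlus_mul_norm_map_le hT u v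
    rw [hu] at this
    nlinarith [norm_nonneg (T u), norm_nonneg (T v)]
  obtain ⟨huv, huv'⟩ := abs_lt.1 (not_le.1 hbig)
  by_cases hvu : -(1 / 2) ≤ rhoPlus v u
  · exact norm_map_le_of_neg_le_rhoPlus hT hu hv huv.le hvu
  have hu' : -(1 / 4) ≤ rhoPlus u (-v) := by
    rw [rhoPlus_neg_right]
    linarith [rhoMinus_le_rhoPlus u v]
  have hvu' : -(1 / 2) ≤ rhoPlus (-v) u := by
    rw [rhoPlus_neg_left, rhoPlus_neg_right]
    linarith [rhoMinus_le_rhoPlus v u]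
  simpa using norm_map_le_of_neg_le_rhoPlus hT hu (by rwa [norm_neg]) hu' hvu'

lemma norm_map_eq_norm_mul (x : X) : ‖T x‖ = ‖x‖ * ‖T (‖x‖⁻¹ • x)‖ := by
  rcases eq_or_ne x 0 with rfl | hx
  · simp
  rw [map_smul, norm_smul, norm_inv, norm_norm, ← mul_assoc,
    mul_inv_cancel₀ (norm_ne_zero_iff.2 hx), one_mul]

lemma exists_bounds_of_preservesRhoStarOrthogonality (hT : PreservesRhoStarOrthogonality T)
    (hT0 : T ≠ 0) : ∃ c C : ℝ, 0 < c ∧ ∀ x, c * ‖x‖ ≤ ‖T x‖ ∧ ‖T x‖ ≤ C * ‖x‖ := by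
  have hunit : ∀ {x : X}, x ≠ 0 → ‖‖x‖⁻¹ • x‖ = 1 := fun hx => by
    rw [norm_smul, norm_inv, norm_norm, inv_mul_cancel₀ (norm_ne_zero_iff.2 hx)]
  obtain ⟨x₀, hx₀⟩ : ∃ x, T x ≠ 0 := by
    by_contra! h
    exact hT0 (LinearMap.ext h)
  have hx₀0 : x₀ ≠ 0 := by
    rintro rfl
    exact hx₀ (map_zero T)
  set u₀ := ‖x₀‖⁻¹ • x₀
  have hTu₀ : 0 < ‖T u₀‖ := by
    have heq := norm_map_eq_norm_mul (T := T) x₀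
    have hpos : 0 < ‖T x₀‖ := norm_pos_iff.2 hx₀
    nlinarith [norm_nonneg x₀, norm_nonneg (T u₀)]
  refine ⟨‖T u₀‖ / 12, 12 * ‖T u₀‖, by positivity, fun x => ?_⟩
  rcases eq_or_ne x 0 with rfl | hx
  · simp
  have h1 := norm_map_le_of_norm_eq_one hT (hunit hx₀0) (hunit hx)
  have h2 := norm_map_le_of_norm_eq_one hT (hunit hx) (hunit hx₀0)
  rw [norm_map_eq_norm_mul x]
  constructor <;> nlinarith [norm_nonneg x]

end OrthogonalityPreserving

section InvariantMean

open BoundedContinuousFunction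

variable {G : Type*} [AddCommGroup G] [TopologicalSpace G]

noncomputable def supAverage (f : G →ᵇ ℝ) {ι : Type*} [Fintype ι] (u : ι → G) : ℝ :=
  ⨆ z, (∑ i, f (z + u i)) / Fintype.card ι

/-- Day's sublinear functional: linear functionals below it are translation-invariant means. -/
noncomputable def upperMean (f : G →ᵇ ℝ) : ℝ :=
  ⨅ u : Σ n : ℕ, Fin (n + 1) → G, supAverage f u.2

variable {ι κ : Type*} [Fintype ι] [Nonempty ι] [Fintype κ] [Nonempty κ]

lemma abs_average_le (f : G →ᵇ ℝ) (u : ι → G) (z : G) :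
    |(∑ i, f (z + u i)) / Fintype.card ι| ≤ ‖f‖ := by
  rw [abs_div, Nat.abs_cast, div_le_iff₀ (by simp [Fintype.card_pos])]
  calc |∑ i, f (z + u i)| ≤ ∑ i, |f (z + u i)| := Finset.abs_sum_le_sum_abs _ _
    _ ≤ ∑ _i : ι, ‖f‖ := Finset.sum_le_sum fun i _ => by
        simpa [Real.norm_eq_abs] using f.norm_coe_le_norm (z + u i)
    _ = ‖f‖ * Fintype.card ι := by simp [mul_comm]

lemma average_le_supAverage (f : G →ᵇ ℝ) (u : ι → G) (z : G) :
    (∑ i, f (z + u i)) / Fintype.card ι ≤ supAverage f u :=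
  le_ciSup ⟨‖f‖, by rintro _ ⟨z, rfl⟩; exact (abs_le.1 (abs_average_le f u z)).2⟩ z

lemma neg_norm_le_supAverage (f : G →ᵇ ℝ) (u : ι → G) : -‖f‖ ≤ supAverage f u :=
  (abs_le.1 (abs_average_le f u 0)).1.trans (average_le_supAverage f u 0)

lemma upperMean_le_supAverage (f : G →ᵇ ℝ) (u : ι → G) : upperMean f ≤ supAverage f u := by
  obtain ⟨n, hn⟩ := Nat.exists_eq_succ_of_ne_zero (Fintype.card_ne_zero (α := ι))
  set e := Fintype.equivFinOfCardEq hn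
  have hbdd : BddBelow (range fun v : Σ n : ℕ, Fin (n + 1) → G => supAverage f v.2) :=
    ⟨-‖f‖, by rintro _ ⟨v, rfl⟩; exact neg_norm_le_supAverage f v.2⟩
  refine (ciInf_le hbdd ⟨n, u ∘ e.symm⟩).trans_eq ?_
  simp only [supAverage, Fintype.card_fin, hn, Function.comp_apply]
  congr 1 with z
  rw [e.symm.sum_comp fun i => f (z + u i)]

lemma upperMean_le_of_forall_le {f : G →ᵇ ℝ} {c : ℝ} (h : ∀ z, f z ≤ c) : upperMean f ≤ c :=
  (upperMean_le_supAverage f fun _ : Unit => (0 : G)).trans (ciSup_le fun z => by simpa using h z)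

lemma upperMean_smul {c : ℝ} (hc : 0 < c) (f : G →ᵇ ℝ) : upperMean (c • f) = c * upperMean f := by
  simp only [upperMean, supAverage, Real.mul_iInf_of_nonneg hc.le, Real.mul_iSup_of_nonneg hc.le,
    coe_smul, smul_eq_mul, ← Finset.mul_sum, mul_div_assoc]

lemma sum_le_card_mul_supAverage (f : G →ᵇ ℝ) (u : ι → G) (z : G) :
    ∑ i, f (z + u i) ≤ Fintype.card ι * supAverage f u := by
  have := average_le_supAverage f u z
  rwa [div_le_iff₀ (by simp [Fintype.card_pos]), mul_comm] at this

lemma supAverage_add_le (f g : G →ᵇ ℝ) (u : ι → G) (v : κ → G) :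
    supAverage (f + g) (fun p : ι × κ => u p.1 + v p.2) ≤ supAverage f u + supAverage g v := by
  refine ciSup_le fun z => ?_
  have hf : ∑ p : ι × κ, f (z + (u p.1 + v p.2)) ≤
      Fintype.card κ * (Fintype.card ι * supAverage f u) := by
    rw [Fintype.sum_prod_type_right]
    calc ∑ j, ∑ i, f (z + (u i + v j)) ≤ ∑ _j : κ, Fintype.card ι * supAverage f u :=
          Finset.sum_le_sum fun j _ => by
            simpa only [add_right_comm z (v j), add_assoc] using
              sum_le_card_mul_supAverage f u (z + v j)
      _ = _ := by simp
  have hg : ∑ p : ι × κ, g (z + (u p.1 + v p.2)) ≤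
      Fintype.card ι * (Fintype.card κ * supAverage g v) := by
    rw [Fintype.sum_prod_type]
    calc ∑ i, ∑ j, g (z + (u i + v j)) ≤ ∑ _i : ι, Fintype.card κ * supAverage g v :=
          Finset.sum_le_sum fun i _ => by
            simpa only [add_assoc] using sum_le_card_mul_supAverage g v (z + u i)
      _ = _ := by simp
  rw [div_le_iff₀ (by simp [Fintype.card_pos])]
  simp only [coe_add, Pi.add_apply, Finset.sum_add_distrib, Fintype.card_prod, Nat.cast_mul]
  linarith

lemma upperMean_add_le (f g : G →ᵇ ℝ) : upperMean (f + g) ≤ upperMean f + upperMean g := by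
  have key : ∀ u v : Σ n : ℕ, Fin (n + 1) → G,
      upperMean (f + g) ≤ supAverage f u.2 + supAverage g v.2 := fun u v =>
    (upperMean_le_supAverage _ _).trans (supAverage_add_le f g u.2 v.2)
  have h : ∀ v : Σ n : ℕ, Fin (n + 1) → G, upperMean (f + g) - supAverage g v.2 ≤ upperMean f :=
    fun v => le_ciInf fun u => by linarith [key u v]
  have : upperMean (f + g) - upperMean f ≤ upperMean g := le_ciInf fun v => by linarith [h v]
  linarith

variable [SeparatelyContinuousAdd G]

lemma upperMean_sub_translate_nonpos (a : G) (f : G →ᵇ ℝ) :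
    upperMean (f - f.compContinuous (ContinuousMap.addRight a)) ≤ 0 := by
  -- average over the orbit `z, z + a, …, z + n • a`: the sum telescopes
  have hbound : ∀ n : ℕ,
      upperMean (f - f.compContinuous (ContinuousMap.addRight a)) ≤ 2 * ‖f‖ / (n + 1 : ℕ) := by
    intro n
    refine (upperMean_le_supAverage _ fun i : Fin (n + 1) => (i : ℕ) • a).trans
      (ciSup_le fun z => ?_)
    rw [Fintype.card_fin]
    gcongr
    have htel := Finset.sum_range_sub' (fun i => f (z + i • a)) (n + 1)
    rw [← Fin.sum_univ_eq_sum_range] at htel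
    simp only [coe_sub, Pi.sub_apply, compContinuous_apply, ContinuousMap.coe_addRight,
      add_assoc, ← succ_nsmul, htel, zero_smul, add_zero]
    have h1 := (abs_le.1 ((Real.norm_eq_abs _).symm.trans_le (f.norm_coe_le_norm z))).2
    have h2 := (abs_le.1 ((Real.norm_eq_abs _).symm.trans_le
      (f.norm_coe_le_norm (z + (n + 1) • a)))).1
    linarith
  exact ge_of_tendsto' ((tendsto_const_div_atTop_nhds_zero_nat _).comp (tendsto_add_atTop_nat 1))
    hbound

theorem exists_translation_invariant_mean :
    ∃ M : (G →ᵇ ℝ) →ₗ[ℝ] ℝ,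
      (∀ f c, (∀ z, f z ≤ c) → M f ≤ c) ∧ (∀ f c, (∀ z, c ≤ f z) → c ≤ M f) ∧
      ∀ a f, M (f.compContinuous (ContinuousMap.addRight a)) = M f := by
  -- any linear functional below `upperMean` will do: extend the zero functional on `{0}`
  obtain ⟨M, -, hM⟩ := exists_extension_of_le_sublinear (⊥ : (G →ᵇ ℝ) →ₗ.[ℝ] ℝ) upperMean
    (fun c hc f => upperMean_smul hc f) upperMean_add_le (fun ⟨x, hx⟩ => by
      obtain rfl : x = 0 := (Submodule.mem_bot ℝ).1 hx
      change (0 : ℝ) ≤ upperMean 0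
      exact le_ciInf fun u => by simpa using neg_norm_le_supAverage (0 : G →ᵇ ℝ) u.2)
  have hle : ∀ f c, (∀ z, f z ≤ c) → M f ≤ c := fun f c h =>
    (hM f).trans (upperMean_le_of_forall_le h)
  refine ⟨M, hle, fun f c h => ?_, fun a f => ?_⟩
  · have := hle (-f) (-c) fun z => by simpa using h z
    rw [map_neg] at this
    linarith
  · have h1 := (hM _).trans (upperMean_sub_translate_nonpos a f)
    have h2 := (hM _).trans
      (upperMean_sub_translate_nonpos (-a) (f.compContinuous (ContinuousMap.addRight a)))
    have hinv : (f.compContinuous (ContinuousMap.addRight a)).compContinuous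
        (ContinuousMap.addRight (-a)) = f := by
      ext z
      simp
    rw [map_sub] at h1 h2
    rw [hinv] at h2
    linarith

end InvariantMean

section Quadratic

open BoundedContinuousFunction

theorem exists_quadratic_of_parallelogram_bounds {Y : Type*} [SeminormedAddCommGroup Y] {a b : ℝ}
    (h : ∀ z w : Y, a * ‖z‖ ^ 2 ≤ ‖z + w‖ ^ 2 + ‖z - w‖ ^ 2 - 2 * ‖w‖ ^ 2 ∧
      ‖z + w‖ ^ 2 + ‖z - w‖ ^ 2 - 2 * ‖w‖ ^ 2 ≤ b * ‖z‖ ^ 2) :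
    ∃ Q : Y → ℝ, (∀ y z, Q (y + z) + Q (y - z) = 2 * Q y + 2 * Q z) ∧
      ∀ y, a * ‖y‖ ^ 2 ≤ Q y ∧ Q y ≤ b * ‖y‖ ^ 2 := by
  obtain ⟨M, hMle, hMge, hMinv⟩ := exists_translation_invariant_mean (G := Y)
  have h' : ∀ y w : Y, a * ‖y‖ ^ 2 ≤ ‖w + y‖ ^ 2 + ‖w - y‖ ^ 2 - 2 * ‖w‖ ^ 2 ∧
      ‖w + y‖ ^ 2 + ‖w - y‖ ^ 2 - 2 * ‖w‖ ^ 2 ≤ b * ‖y‖ ^ 2 := fun y w => by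
    simpa only [add_comm y w, norm_sub_rev y w] using h y w
  let D : Y → Y →ᵇ ℝ := fun y => ofNormedAddCommGroup
    (fun w => ‖w + y‖ ^ 2 + ‖w - y‖ ^ 2 - 2 * ‖w‖ ^ 2) (by fun_prop) ((|a| + |b|) * ‖y‖ ^ 2)
    fun w => by
      rw [Real.norm_eq_abs, abs_le]
      constructor <;> nlinarith [h' y w, neg_abs_le a, le_abs_self b, abs_nonneg a, abs_nonneg b,
        sq_nonneg ‖y‖]
  refine ⟨fun y => M (D y), fun y z => ?_,
    fun y => ⟨hMge _ _ fun w => (h' y w).1, hMle _ _ fun w => (h' y w).2⟩⟩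
  have hD : D (y + z) + D (y - z) = D y + D y + (D z).compContinuous (ContinuousMap.addRight y) +
      (D z).compContinuous (ContinuousMap.addRight (-y)) := by
    ext w
    simp only [D, coe_add, Pi.add_apply, compContinuous_apply, ContinuousMap.coe_addRight,
      coe_ofNormedAddCommGroup]
    abel_nf
    ring
  rw [← map_add, hD, map_add, map_add, map_add, hMinv, hMinv]
  ring

end Quadratic

section JordanVonNeumann

open QuadraticMap

lemma map_add_of_map_add_add_map_sub {G : Type*} [AddCommGroup G] {P : G → ℝ} (h0 : P 0 = 0)
    (h : ∀ u v, P (u + v) + P (u - v) = 2 * P u) (x y : G) : P (x + y) = P x + P y := by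
  have hdouble : ∀ u, P (u + u) = 2 * P u := fun u => by simpa [h0] using h u u
  have := h (x + y) (x - y)
  rw [show x + y + (x - y) = x + x by abel, show x + y - (x - y) = y + y by abel, hdouble,
    hdouble] at this
  linarith

lemma AddMonoidHom.continuous_of_abs_le_of_norm_le_one {E : Type*} [SeminormedAddCommGroup E]
    (φ : E →+ ℝ) {C : ℝ} (hC : ∀ x, ‖x‖ ≤ 1 → |φ x| ≤ C) : Continuous φ := by
  refine continuous_of_continuousAt_zero φ ?_
  rw [ContinuousAt, map_zero, Metric.tendsto_nhds]
  intro ε hε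
  obtain ⟨n, hn⟩ := exists_nat_gt (C / ε)
  have hC0 : 0 ≤ C := (abs_nonneg _).trans (hC 0 (by simp))
  have hn0 : (0 : ℝ) < n := (div_nonneg hC0 hε.le).trans_lt hn
  filter_upwards [Metric.ball_mem_nhds (0 : E) (inv_pos.2 hn0)] with z hz
  rw [mem_ball_zero_iff] at hz
  have hsmall : ‖n • z‖ ≤ 1 := by
    calc ‖n • z‖ ≤ n * ‖z‖ := norm_nsmul_le
      _ ≤ n * (n : ℝ)⁻¹ := by gcongr
      _ = 1 := mul_inv_cancel₀ hn0.ne'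
  have hbound := hC _ hsmall
  rw [map_nsmul, nsmul_eq_mul, abs_mul, Nat.abs_cast] at hbound
  rw [Real.dist_eq, sub_zero]
  rw [div_lt_iff₀ hε] at hn
  nlinarith

theorem exists_bilinForm_of_parallelogram {X : Type*} [NormedAddCommGroup X] [NormedSpace ℝ X]
    {Q : X → ℝ} {C : ℝ} (hpar : ∀ x y, Q (x + y) + Q (x - y) = 2 * Q x + 2 * Q y)
    (hbound : ∀ x, |Q x| ≤ C * ‖x‖ ^ 2) :
    ∃ B : LinearMap.BilinForm ℝ X, (∀ x y, B x y = B y x) ∧ ∀ x, B x x = Q x := by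
  have hQ0 : Q 0 = 0 := by
    have := hpar 0 0
    simp only [add_zero, sub_zero] at this
    linarith
  have hadd : ∀ y x x', polar Q (x + x') y = polar Q x y + polar Q x' y := fun y =>
    map_add_of_map_add_add_map_sub (P := fun x => polar Q x y) (by simp [polar, hQ0]) fun u v => by
      have h1 := hpar (u + y) v
      have h2 := hpar u v
      rw [show u + y + v = u + v + y by abel, show u + y - v = u - v + y by abel] at h1
      simp only [polar]
      linarith
  have hsmul : ∀ y (c : ℝ) x, polar Q (c • x) y = c * polar Q x y := fun y => by
    let φ : X →+ ℝ := AddMonoidHom.mk' (fun x => polar Q x y) (hadd y)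
    have hφ : Continuous φ := φ.continuous_of_abs_le_of_norm_le_one
      (C := |C| * ((1 + ‖y‖) ^ 2 + 1 + ‖y‖ ^ 2)) fun x hx => by
        have hxy : ‖x + y‖ ≤ 1 + ‖y‖ := (norm_add_le x y).trans (by linarith)
        have hQ : ∀ z, |Q z| ≤ |C| * ‖z‖ ^ 2 := fun z =>
          (hbound z).trans (mul_le_mul_of_nonneg_right (le_abs_self C) (by positivity))
        calc |polar Q x y| ≤ |Q (x + y)| + |Q x| + |Q y| := by
              simp only [polar]
              exact (abs_sub _ _).trans (add_le_add_left (abs_sub _ _) _)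
          _ ≤ |C| * ‖x + y‖ ^ 2 + |C| * ‖x‖ ^ 2 + |C| * ‖y‖ ^ 2 := by gcongr <;> exact hQ _
          _ ≤ |C| * ((1 + ‖y‖) ^ 2 + 1 + ‖y‖ ^ 2) := by
              rw [← mul_add, ← mul_add]
              gcongr
              exact pow_le_one₀ (norm_nonneg _) hx
    exact map_real_smul φ hφ
  refine ⟨LinearMap.mk₂ ℝ (fun x y => polar Q x y / 2) (fun x x' y => by rw [hadd, add_div])
    (fun c x y => by rw [hsmul, smul_eq_mul, mul_div_assoc])
    (fun x y y' => by rw [polar_comm, hadd, polar_comm Q y, polar_comm Q y', add_div])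
    (fun c x y => by rw [polar_comm, hsmul, polar_comm, smul_eq_mul, mul_div_assoc]),
    fun x y => by simp [polar_comm], fun x => ?_⟩
  have := hpar x x
  simp only [LinearMap.mk₂_apply, polar, sub_self, hQ0] at this ⊢
  linarith

end JordanVonNeumann

lemma exists_sqrt_bounds_of_norm_sq_bounds {X : Type*} [SeminormedAddCommGroup X] {q : X → ℝ} {α β : ℝ}
    (hα : 0 < α) (hq : ∀ x, α * ‖x‖ ^ 2 ≤ q x ∧ q x ≤ β * ‖x‖ ^ 2) :
    ∃ k : ℝ, 1 ≤ k ∧ ∀ x, 1 / k * ‖x‖ ≤ √(q x) ∧ √(q x) ≤ k * ‖x‖ := by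
  have hsqrt : ∀ (γ : ℝ) (x : X), √(γ * ‖x‖ ^ 2) = √γ * ‖x‖ := fun γ x => by
    rw [Real.sqrt_mul' γ (sq_nonneg _), Real.sqrt_sq (norm_nonneg x)]
  have hα' : 0 < √α := Real.sqrt_pos.2 hα
  refine ⟨max 1 (max √β (√α)⁻¹), le_max_left _ _, fun x => ⟨?_, ?_⟩⟩
  · calc 1 / max 1 (max √β (√α)⁻¹) * ‖x‖ ≤ √α * ‖x‖ := by
          gcongr
          rw [one_div_le (by positivity) hα', one_div]
          exact (le_max_right _ _).trans (le_max_right _ _)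
      _ = √(α * ‖x‖ ^ 2) := (hsqrt α x).symm
      _ ≤ √(q x) := Real.sqrt_le_sqrt (hq x).1
  · calc √(q x) ≤ √(β * ‖x‖ ^ 2) := Real.sqrt_le_sqrt (hq x).2
      _ = √β * ‖x‖ := hsqrt β x
      _ ≤ max 1 (max √β (√α)⁻¹) * ‖x‖ := by
          gcongr
          exact (le_max_left _ _).trans (le_max_right _ _)

theorem exists_inner_of_parallelogram {X : Type*} [NormedAddCommGroup X] [NormedSpace ℝ X]
    {Q : X → ℝ} {α β : ℝ} (hα : 0 < α) (hpar : ∀ x y, Q (x + y) + Q (x - y) = 2 * Q x + 2 * Q y)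
    (hQ : ∀ x, α * ‖x‖ ^ 2 ≤ Q x ∧ Q x ≤ β * ‖x‖ ^ 2) :
    ∃ inner : X → X → ℝ,
      (∀ x y : X, inner x y = inner y x) ∧
      (∀ (a : ℝ) (x y z : X), inner (a • x + y) z = a * inner x z + inner y z) ∧
      (∀ x : X, 0 ≤ inner x x) ∧
      (∀ x : X, inner x x = 0 → x = 0) ∧
      ∃ k : ℝ, 1 ≤ k ∧ ∀ x : X,
        (1 / k) * ‖x‖ ≤ Real.sqrt (inner x x) ∧ Real.sqrt (inner x x) ≤ k * ‖x‖ := by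
  have hQnonneg : ∀ x, 0 ≤ Q x := fun x => (by positivity : 0 ≤ α * ‖x‖ ^ 2).trans (hQ x).1
  obtain ⟨B, hBsymm, hBQ⟩ := exists_bilinForm_of_parallelogram hpar (C := β) fun x =>
    abs_le.2 ⟨by linarith [hQnonneg x, (hQ x).2], (hQ x).2⟩
  obtain ⟨k, hk, hkx⟩ :=
    exists_sqrt_bounds_of_norm_sq_bounds (q := fun x => B x x) hα (by simpa [hBQ] using hQ)
  refine ⟨fun x y => B x y, hBsymm, fun a x y z => by simp, fun x => (hQnonneg x).trans_eq (hBQ x).symm,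
    fun x hx => ?_, k, hk, hkx⟩
  by_contra hx0
  have hpos : 0 < α * ‖x‖ ^ 2 := by have := norm_pos_iff.2 hx0; positivity
  have hle := (hQ x).1
  rw [← hBQ] at hle
  exact hle.not_gt (hpos.trans_eq' hx.symm)

theorem equiv_inner_of_parallelogram_target_general {X Y : Type*} [NormedAddCommGroup X]
    [NormedSpace ℝ X] [NormedAddCommGroup Y] [NormedSpace ℝ Y]
    (δ : ℝ) (hδ0 : 0 ≤ δ) (hδ1 : δ < 1)
    (hpar : ∀ z w : Y,
      2 * (1 - δ) * ‖z‖ ^ 2 ≤ ‖z + w‖ ^ 2 + ‖z - w‖ ^ 2 - 2 * ‖w‖ ^ 2 ∧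
      ‖z + w‖ ^ 2 + ‖z - w‖ ^ 2 - 2 * ‖w‖ ^ 2 ≤ 2 * (1 + δ) * ‖z‖ ^ 2)
    (T : X →ₗ[ℝ] Y) (hT : T ≠ 0)
    (hpres : ∀ x y : X, rhoStar x y = 0 → rhoStar (T x) (T y) = 0) :
    ∃ inner : X → X → ℝ,
      (∀ x y : X, inner x y = inner y x) ∧
      (∀ (a : ℝ) (x y z : X), inner (a • x + y) z = a * inner x z + inner y z) ∧
      (∀ x : X, 0 ≤ inner x x) ∧
      (∀ x : X, inner x x = 0 → x = 0) ∧
      ∃ k : ℝ, 1 ≤ k ∧ ∀ x : X,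
        (1 / k) * ‖x‖ ≤ Real.sqrt (inner x x) ∧ Real.sqrt (inner x x) ≤ k * ‖x‖ := by
  obtain ⟨c, C, hc, hTbounds⟩ := exists_bounds_of_preservesRhoStarOrthogonality hpres hT
  obtain ⟨Q, hQpar, hQ⟩ := exists_quadratic_of_parallelogram_bounds hpar
  have h1δ : 0 < 1 - δ := by linarith
  refine exists_inner_of_parallelogram (Q := fun x => Q (T x)) (α := 2 * (1 - δ) * c ^ 2)
    (β := 2 * (1 + δ) * C ^ 2) (by positivity) (fun x y => by simpa using hQpar (T x) (T y))
    fun x => ⟨?_, ?_⟩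
  · calc 2 * (1 - δ) * c ^ 2 * ‖x‖ ^ 2 = 2 * (1 - δ) * (c * ‖x‖) ^ 2 := by ring
      _ ≤ 2 * (1 - δ) * ‖T x‖ ^ 2 := by gcongr; exact (hTbounds x).1
      _ ≤ Q (T x) := (hQ (T x)).1
  · calc Q (T x) ≤ 2 * (1 + δ) * ‖T x‖ ^ 2 := (hQ (T x)).2
      _ ≤ 2 * (1 + δ) * (C * ‖x‖) ^ 2 := by gcongr; exact (hTbounds x).2
      _ = 2 * (1 + δ) * C ^ 2 * ‖x‖ ^ 2 := by ring

theorem equiv_inner_of_parallelogram_target {X Y : Type*} [NormedAddCommGroup X]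
    [NormedSpace ℝ X] [NormedAddCommGroup Y] [NormedSpace ℝ Y]
    (hdim : 2 ≤ Module.rank ℝ X) (δ : ℝ) (hδ0 : 0 ≤ δ) (hδ1 : δ < 1)
    (hpar : ∀ z w : Y,
      2 * (1 - δ) * ‖z‖ ^ 2 ≤ ‖z + w‖ ^ 2 + ‖z - w‖ ^ 2 - 2 * ‖w‖ ^ 2 ∧
      ‖z + w‖ ^ 2 + ‖z - w‖ ^ 2 - 2 * ‖w‖ ^ 2 ≤ 2 * (1 + δ) * ‖z‖ ^ 2)
    (T : X →ₗ[ℝ] Y) (hT : T ≠ 0)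
    (hpres : ∀ x y : X, rhoStar x y = 0 → rhoStar (T x) (T y) = 0) :
    ∃ inner : X → X → ℝ,
      (∀ x y : X, inner x y = inner y x) ∧
      (∀ (a : ℝ) (x y z : X), inner (a • x + y) z = a * inner x z + inner y z) ∧
      (∀ x : X, 0 ≤ inner x x) ∧
      (∀ x : X, inner x x = 0 → x = 0) ∧
      ∃ k : ℝ, 1 ≤ k ∧ ∀ x : X,
        (1 / k) * ‖x‖ ≤ Real.sqrt (inner x x) ∧ Real.sqrt (inner x x) ≤ k * ‖x‖ :=
  equiv_inner_of_parallelogram_target_general δ hδ0 hδ1 hpar T hT hpres
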